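/- If the DCA subproblems are solved inexactly so that h_t(x_{t+1}) - h_t(x) ≤ ε/2 for all x ∈ P and all t, then min_{0≤t≤T} max_{x∈P} { f(x_t) - f(x) - ⟨∇g(x_t), x_t - x⟩ } ≤ (φ(x_0) - φ(x*))/(T+1) + ε/2. -/

import Mathlib

/-!
Since `g` is convex, its linearization at `x_t` minorizes it, so the DCA surrogate
`h_t` majorizes `φ = f - g` and touches it at `x_t`. The gap at `x_t` is
`h_t(x_t) - min_P h_t ≤ φ(x_t) - h_t(x_{t+1}) + ε/2 ≤ φ(x_t) - φ(x_{t+1}) + ε/2`;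
these bounds telescope, so their average, and hence the smallest gap, is at most
`(φ(x_0) - φ(x*))/(T+1) + ε/2`.
-/

open RealInnerProductSpace

theorem ConvexOn.fderiv_apply_sub_le {E : Type*} [NormedAddCommGroup E] [NormedSpace ℝ E]
    {s : Set E} {g : E → ℝ} (hg : ConvexOn ℝ s g) {x y : E} (hx : x ∈ s) (hy : y ∈ s)
    (hgd : DifferentiableAt ℝ g x) :
    fderiv ℝ g x (y - x) ≤ g y - g x := by
  have hline : ConvexOn ℝ (AffineMap.lineMap x y ⁻¹' s) (g ∘ AffineMap.lineMap x y) :=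
    hg.comp_affineMap (AffineMap.lineMap x y)
  have hderiv : HasDerivAt (g ∘ AffineMap.lineMap x y) (fderiv ℝ g x (y - x)) (0 : ℝ) := by
    have hgx : HasFDerivAt g (fderiv ℝ g x) (AffineMap.lineMap x y (0 : ℝ)) := by
      simpa using hgd.hasFDerivAt
    exact hgx.comp_hasDerivAt 0 AffineMap.hasDerivAt_lineMap
  simpa [slope] using hline.le_slope_of_hasDerivAt (x := 0) (y := 1) (by simpa) (by simpa)
    one_pos hderiv

section DCA

variable {E : Type*} [NormedAddCommGroup E] [InnerProductSpace ℝ E] [CompleteSpace E]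

theorem ConvexOn.add_inner_gradient_le {s : Set E} {g : E → ℝ} (hg : ConvexOn ℝ s g)
    {x y : E} (hx : x ∈ s) (hy : y ∈ s) (hgd : DifferentiableAt ℝ g x) :
    g x + ⟪gradient g x, y - x⟫ ≤ g y := by
  have := hg.fderiv_apply_sub_le hx hy hgd
  rw [← inner_gradient_left] at this
  linarith

/-- The paper's `h_t` with `u = x_t`. -/
noncomputable def dcaSurrogate (f g : E → ℝ) (u w : E) : ℝ :=
  f w - g u - ⟪gradient g u, w - u⟫

variable {f g : E → ℝ}

theorem dcaSurrogate_self (u : E) : dcaSurrogate f g u u = f u - g u := by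
  simp [dcaSurrogate]

theorem sub_le_dcaSurrogate (hg : ConvexOn ℝ Set.univ g) {u : E} (hgd : DifferentiableAt ℝ g u)
    (w : E) : f w - g w ≤ dcaSurrogate f g u w := by
  have := hg.add_inner_gradient_le (Set.mem_univ u) (Set.mem_univ w) hgd
  unfold dcaSurrogate
  linarith

theorem gap_eq_dcaSurrogate_sub (u y : E) :
    f u - f y - ⟪gradient g u, u - y⟫ = dcaSurrogate f g u u - dcaSurrogate f g u y := by
  have : ⟪gradient g u, y - u⟫ = -⟪gradient g u, u - y⟫ := by
    rw [← inner_neg_right, neg_sub]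
  simp only [dcaSurrogate, this, sub_self, inner_zero_right]
  ring

theorem gap_le_sub_add_of_dcaSurrogate_sub_le (hg : ConvexOn ℝ Set.univ g) {u v y : E}
    (hgd : DifferentiableAt ℝ g u) {δ : ℝ}
    (hv : dcaSurrogate f g u v - dcaSurrogate f g u y ≤ δ) :
    f u - f y - ⟪gradient g u, u - y⟫ ≤ (f u - g u) - (f v - g v) + δ := by
  rw [gap_eq_dcaSurrogate_sub, dcaSurrogate_self]
  linarith [sub_le_dcaSurrogate (f := f) hg hgd v]

end DCA

theorem exists_le_of_forall_le_sub_succ_add {a b : ℕ → ℝ} {c : ℝ} (T : ℕ)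
    (h : ∀ t ≤ T, a t ≤ b t - b (t + 1) + c) :
    ∃ t ≤ T, a t ≤ (b 0 - b (T + 1)) / (T + 1 : ℝ) + c := by
  have hsum : ∑ t ∈ Finset.range (T + 1), a t ≤
      ∑ _t ∈ Finset.range (T + 1), ((b 0 - b (T + 1)) / (T + 1 : ℝ) + c) := calc
    ∑ t ∈ Finset.range (T + 1), a t
        ≤ ∑ t ∈ Finset.range (T + 1), (b t - b (t + 1) + c) :=
      Finset.sum_le_sum fun t ht => h t (Nat.lt_succ_iff.mp (Finset.mem_range.mp ht))
    _ = b 0 - b (T + 1) + (T + 1) * c := by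
      rw [Finset.sum_add_distrib, Finset.sum_range_sub']
      simp
    _ = ∑ _t ∈ Finset.range (T + 1), ((b 0 - b (T + 1)) / (T + 1 : ℝ) + c) := by
      simp only [Finset.sum_const, Finset.card_range, nsmul_eq_mul]
      push_cast
      field_simp
  obtain ⟨t, ht, hle⟩ := Finset.exists_le_of_sum_le Finset.nonempty_range_add_one hsum
  exact ⟨t, Nat.lt_succ_iff.mp (Finset.mem_range.mp ht), hle⟩

theorem stmt4_general {n : ℕ} (P : Set (EuclideanSpace ℝ (Fin n)))
    (f g : EuclideanSpace ℝ (Fin n) → ℝ)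
    (hg : ConvexOn ℝ Set.univ g) (hgd : Differentiable ℝ g)
    (ε : ℝ)
    (T : ℕ) (x : ℕ → EuclideanSpace ℝ (Fin n))
    (hxP : ∀ t ≤ T + 1, x t ∈ P)
    (φ : EuclideanSpace ℝ (Fin n) → ℝ)
    (hφ : ∀ y, φ y = f y - g y)
    (ht : ℕ → EuclideanSpace ℝ (Fin n) → ℝ)
    (hht : ∀ t y, ht t y = f y - g (x t) - ⟪gradient g (x t), y - x t⟫)
    (hinexact : ∀ t ≤ T, ∀ y ∈ P, ht t (x (t + 1)) - ht t y ≤ ε / 2)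
    (G : ℕ → ℝ)
    (hG : ∀ t ≤ T,
      IsGreatest ((fun y => f (x t) - f y - ⟪gradient g (x t), x t - y⟫) '' P) (G t))
    (xstar : EuclideanSpace ℝ (Fin n))
    (hstar : xstar ∈ P ∧ ∀ y ∈ P, φ xstar ≤ φ y) :
    ∃ t ≤ T, G t ≤ (φ (x 0) - φ xstar) / (T + 1 : ℝ) + ε / 2 := by
  obtain rfl : ht = fun t => dcaSurrogate f g (x t) := funext fun t => funext (hht t)
  have hdescent : ∀ t ≤ T, G t ≤ φ (x t) - φ (x (t + 1)) + ε / 2 := by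
    intro t htT
    obtain ⟨y, hyP, hy⟩ := (hG t htT).1
    rw [← hy, hφ, hφ]
    exact gap_le_sub_add_of_dcaSurrogate_sub_le hg (hgd (x t)) (hinexact t htT y hyP)
  obtain ⟨t, htT, hGt⟩ := exists_le_of_forall_le_sub_succ_add T hdescent
  have hmin : φ xstar ≤ φ (x (T + 1)) := hstar.2 _ (hxP (T + 1) le_rfl)
  refine ⟨t, htT, hGt.trans ?_⟩
  gcongr

/-- Inexact DCA with additive error ε/2 per subproblem (Theorem: inexact DCA convergence). -/
theorem stmt4 {n : ℕ} (P : Set (EuclideanSpace ℝ (Fin n)))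
    (hPc : IsCompact P) (hPconv : Convex ℝ P)
    (f g : EuclideanSpace ℝ (Fin n) → ℝ)
    (hf : ConvexOn ℝ Set.univ f) (hfd : Differentiable ℝ f)
    (hg : ConvexOn ℝ Set.univ g) (hgd : Differentiable ℝ g)
    (ε : ℝ) (hε : 0 < ε)
    (T : ℕ) (x : ℕ → EuclideanSpace ℝ (Fin n))
    (hxP : ∀ t ≤ T + 1, x t ∈ P)
    (φ : EuclideanSpace ℝ (Fin n) → ℝ)
    (hφ : ∀ y, φ y = f y - g y)
    (ht : ℕ → EuclideanSpace ℝ (Fin n) → ℝ)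
    (hht : ∀ t y, ht t y = f y - g (x t) - ⟪gradient g (x t), y - x t⟫)
    (hinexact : ∀ t ≤ T, ∀ y ∈ P, ht t (x (t + 1)) - ht t y ≤ ε / 2)
    (G : ℕ → ℝ)
    (hG : ∀ t ≤ T,
      IsGreatest ((fun y => f (x t) - f y - ⟪gradient g (x t), x t - y⟫) '' P) (G t))
    (xstar : EuclideanSpace ℝ (Fin n))
    (hstar : xstar ∈ P ∧ ∀ y ∈ P, φ xstar ≤ φ y) :
    ∃ t ≤ T, G t ≤ (φ (x 0) - φ xstar) / (T + 1 : ℝ) + ε / 2 :=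
  stmt4_general P f g hg hgd ε T x hxP φ hφ ht hht hinexact G hG xstar hstar
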